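/- Let σ(Δ) = {E ∈ ℕ : E is a sum of two squares} be the set of Laplace eigenvalues on 𝕋². There exists a subset S ⊆ σ(Δ) of relative density 1 in σ(Δ) (i.e. #(S ∩ [1,N]) / #(σ(Δ) ∩ [1,N]) → 1 as N → ∞) such that for every continuous function a on 𝕋² and every ε > 0 there exists Λ > 0 with the following property: for every E ∈ S with E ≥ Λ and every L²-normalized Laplace eigenfunction ψ on 𝕋² with eigenvalue E, one has |∫_{𝕋²} a|ψ|² dx − ∫_{𝕋²} a dx| < ε. -/

import Mathlib

open MeasureTheory Real BigOperators ComplexConjugate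

noncomputable section

instance : Fact (0 < 2 * π) := ⟨by positivity⟩

/-- The flat torus `𝕋^d = ℝ^d/(2πℤ)^d`. -/
abbrev Td (d : ℕ) := Fin d → AddCircle (2 * π)

/-- The normalized Haar probability measure on the flat torus. -/
def haarT (d : ℕ) : Measure (Td d) :=
  Measure.pi fun _ : Fin d => AddCircle.haarAddCircle

/-- The character `e_k(x) = e^{i⟨k,x⟩}` for `k ∈ ℤ^d`. -/
def eChar {d : ℕ} (k : Fin d → ℤ) (x : Td d) : ℂ := ∏ i, fourier (k i) (x i)

/-- Euclidean norm of a lattice point of `ℤ^d`. -/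
def znorm {d : ℕ} (k : Fin d → ℤ) : ℝ := Real.sqrt (∑ i, ((k i : ℝ)) ^ 2)

/-- The primitive lattice point `n̂` generating `n ≠ 0`: divide out the gcd of coordinates. -/
def primPart {d : ℕ} (n : Fin d → ℤ) : Fin d → ℤ := fun i => n i / Finset.univ.gcd n

/-- Fourier coefficient `â_n = ∫ a(x) e^{-i⟨n,x⟩} dx` of `a ∈ L²(𝕋^d)`. -/
def fcoef {d : ℕ} (a : Td d → ℂ) (n : Fin d → ℤ) : ℂ :=
  ∫ x, a x * conj (eChar n x) ∂(haarT d)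

/-- Fourier transform `μ̂(n) = ∫ e^{-i⟨n,x⟩} dμ(x)` of a measure on `𝕋^d`. -/
def muF {d : ℕ} (μ : Measure (Td d)) (n : Fin d → ℤ) : ℂ :=
  ∫ x, conj (eChar n x) ∂μ

/-- `N(λ) = #{k ∈ ℤ^d : ‖k‖ ≤ λ}`, the spectral counting function. -/
def latticeCount (d : ℕ) (lam : ℝ) : ℕ := Set.ncard {k : Fin d → ℤ | znorm k ≤ lam}

/-- An eigenbasis of `L²(𝕋^d)`: an orthonormal basis `(ψ_j)` of Laplace eigenfunctions
`ψ_j = ∑_{‖k‖ = Λ j} c_j(k) e_k`, with nondecreasing eigenvalues `(Λ j)²` (nonnegative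
integers), orthonormality and completeness expressed via the Fourier coefficients. -/
structure Eigenbasis (d : ℕ) where
  ψ : ℕ → Td d → ℂ
  Λ : ℕ → ℝ
  c : ℕ → (Fin d → ℤ) → ℂ
  nonneg : ∀ j, 0 ≤ Λ j
  mono : Monotone Λ
  eig_int : ∀ j, ∃ E : ℕ, Λ j ^ 2 = E
  repr : ∀ j x, ψ j x = ∑' k : Fin d → ℤ, c j k * eChar k x
  supp : ∀ j k, c j k ≠ 0 → znorm k = Λ j
  ortho : ∀ i j, ∑' k : Fin d → ℤ, c i k * conj (c j k) = if i = j then 1 else 0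
  complete : ∀ k l : Fin d → ℤ, ∑' j : ℕ, c j k * conj (c j l) = if k = l then 1 else 0

/-- A function on the torus is smooth if its `(2πℤ)^d`-periodic lift to `ℝ^d` is `C^∞`. -/
def SmoothOnTorus {d : ℕ} (a : Td d → ℂ) : Prop :=
  ContDiff ℝ (⊤ : ℕ∞) fun x : Fin d → ℝ => a fun i => (x i : AddCircle (2 * π))

/-- The set of eigenvalues of the Laplacian on `𝕋²`: integers that are sums of two squares. -/
def sumTwoSquares : Set ℕ := {E : ℕ | ∃ a b : ℤ, (E : ℤ) = a ^ 2 + b ^ 2}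

/-!
Approximate `a` uniformly by a trigonometric polynomial `P` whose frequencies lie in the
`ℓ¹`-ball of radius `M`. For `ψ = ∑_{|k|² = E} c_k e_k` we have `|ψ|² = ∑_{k,l} c_k c̄_l e_{k-l}`,
which has no Fourier mode `n` with `0 < |n|₁ ≤ M` as soon as distinct lattice points on the
circle `|k|² = E` are more than `M` apart in `ℓ¹`. Then `∫ P |ψ|² = ∫ P`, and the error is at most
`2 ‖a - P‖_∞`.

It remains to see that, with `M = ⌊E^{1/16}⌋`, this separation fails only on a set of relative
density zero. A failing `E ≤ N` is determined by a short difference vector `n` between two of its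
lattice points `k`, `n + k` together with the cross product `k ∧ n`, because `|k|² = |n + k|²`
fixes `⟨k, n⟩`; so there are `O(N^{1/2 + 3/16})` failures. On the other hand the numbers
`b² + a²` with `√N / 2 ≤ b < √N` and `a ≤ N^{1/4} / 2` are pairwise distinct, so there are at
least `N^{3/4} / 4` sums of two squares up to `N`.
-/

theorem Continuous.integrable_of_compactSpace {X E : Type*} [TopologicalSpace X] [CompactSpace X]
    [MeasurableSpace X] [OpensMeasurableSpace X] [NormedAddCommGroup E] {μ : Measure X}
    [IsFiniteMeasure μ] {f : X → E} (hf : Continuous f) : Integrable f μ :=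
  hf.integrable_of_hasCompactSupport (HasCompactSupport.of_compactSpace f)

section Torus

variable {d : ℕ}

instance : IsProbabilityMeasure (haarT d) := by unfold haarT; infer_instance

@[fun_prop]
theorem continuous_eChar (k : Fin d → ℤ) : Continuous (eChar k) :=
  continuous_finsetProd _ fun i _ => (fourier (k i)).continuous.comp (continuous_apply i)

theorem eChar_zero (x : Td d) : eChar 0 x = 1 := by
  simp [eChar]

theorem eChar_add (k l : Fin d → ℤ) (x : Td d) : eChar (k + l) x = eChar k x * eChar l x := by
  simp only [eChar, ← Finset.prod_mul_distrib, Pi.add_apply, fourier_add]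

theorem conj_eChar (k : Fin d → ℤ) (x : Td d) : conj (eChar k x) = eChar (-k) x := by
  simp only [eChar, map_prod, Pi.neg_apply, fourier_neg]

theorem integral_fourier_haarAddCircle (n : ℤ) :
    ∫ x : AddCircle (2 * π), fourier n x ∂AddCircle.haarAddCircle = if n = 0 then 1 else 0 := by
  split_ifs with h
  · simp [h]
  · exact integral_eq_zero_of_add_right_eq_neg (fourier_add_half_inv_index h (by positivity))

theorem integral_eChar (k : Fin d → ℤ) : ∫ x, eChar k x ∂haarT d = if k = 0 then 1 else 0 := by
  simp only [eChar, haarT, integral_fintype_prod_eq_prod (fun i x => fourier (k i) x),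
    integral_fourier_haarAddCircle, Finset.prod_ite_zero, Finset.prod_const_one, funext_iff,
    Finset.mem_univ, true_imp_iff, Pi.zero_apply]

end Torus

section Approx

variable {d : ℕ}

def torusHomeomorphUnit (d : ℕ) : Td d ≃ₜ UnitAddTorus (Fin d) :=
  Homeomorph.piCongrRight fun _ =>
    AddCircle.homeomorphAddCircle (2 * π) 1 (by positivity) one_ne_zero

theorem fourier_homeomorphAddCircle {p q : ℝ} (hp : p ≠ 0) (hq : q ≠ 0) (n : ℤ) (x : AddCircle p) :
    fourier n (AddCircle.homeomorphAddCircle p q hp hq x) = fourier n x := by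
  induction x using QuotientAddGroup.induction_on with
  | H t =>
    rw [AddCircle.homeomorphAddCircle_apply_mk, fourier_coe_apply, fourier_coe_apply]
    congr 1
    push_cast
    field_simp
    exact mul_div_mul_right _ _ (by exact_mod_cast hq)

theorem mFourier_torusHomeomorphUnit (k : Fin d → ℤ) (x : Td d) :
    UnitAddTorus.mFourier k (torusHomeomorphUnit d x) = eChar k x := by
  simp only [UnitAddTorus.mFourier, torusHomeomorphUnit, ContinuousMap.coe_mk,
    Homeomorph.piCongrRight_apply, fourier_homeomorphAddCircle, eChar]

theorem exists_sum_eChar_approx {a : Td d → ℂ} (ha : Continuous a) {ε : ℝ} (hε : 0 < ε) :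
    ∃ p : (Fin d → ℤ) →₀ ℂ, ∀ x, ‖a x - ∑ n ∈ p.support, p n * eChar n x‖ < ε := by
  let φ := torusHomeomorphUnit d
  have hmem : (⟨a ∘ φ.symm, ha.comp φ.symm.continuous⟩ : C(UnitAddTorus (Fin d), ℂ)) ∈
      (Submodule.span ℂ (Set.range UnitAddTorus.mFourier)).topologicalClosure := by
    rw [UnitAddTorus.span_mFourier_closure_eq_top]; trivial
  obtain ⟨P, hPspan, hPdist⟩ := Metric.mem_closure_iff.1 hmem ε hε
  obtain ⟨p, rfl⟩ := Finsupp.mem_span_range_iff_exists_finsupp.1 hPspan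
  refine ⟨p, fun x => ?_⟩
  have hdist := (ContinuousMap.dist_apply_le_dist (φ x)).trans_lt hPdist
  simpa [dist_eq_norm, Finsupp.sum, mFourier_torusHomeomorphUnit, φ] using hdist

end Approx

section Fourier

variable {d : ℕ}

theorem eChar_mul_normSq_sum (t : Finset (Fin d → ℤ)) (c : (Fin d → ℤ) → ℂ) (n : Fin d → ℤ)
    (x : Td d) :
    eChar n x * ((‖∑ k ∈ t, c k * eChar k x‖ ^ 2 : ℝ) : ℂ)
      = ∑ k ∈ t, ∑ l ∈ t, c k * conj (c l) * eChar (n + k - l) x := by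
  rw [Complex.ofReal_pow, ← Complex.mul_conj', map_sum, Finset.sum_mul_sum, Finset.mul_sum]
  refine Finset.sum_congr rfl fun k _ => ?_
  rw [Finset.mul_sum]
  refine Finset.sum_congr rfl fun l _ => ?_
  rw [map_mul, conj_eChar, sub_eq_add_neg, eChar_add, eChar_add]
  ring

theorem integral_eChar_mul_normSq_sum (t : Finset (Fin d → ℤ)) (c : (Fin d → ℤ) → ℂ)
    (n : Fin d → ℤ) :
    ∫ x, eChar n x * ((‖∑ k ∈ t, c k * eChar k x‖ ^ 2 : ℝ) : ℂ) ∂haarT d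
      = ∑ k ∈ t, ∑ l ∈ t, if n + k = l then c k * conj (c l) else 0 := by
  simp_rw [eChar_mul_normSq_sum]
  rw [integral_finsetSum _ fun k _ => integrable_finsetSum _ fun l _ =>
    ((continuous_eChar _).const_mul _).integrable_of_compactSpace]
  refine Finset.sum_congr rfl fun k _ => ?_
  rw [integral_finsetSum _ fun l _ => ((continuous_eChar _).const_mul _).integrable_of_compactSpace]
  refine Finset.sum_congr rfl fun l _ => ?_
  simp only [integral_const_mul, integral_eChar, sub_eq_zero, mul_ite, mul_one, mul_zero]

theorem integral_eChar_mul_normSq_sum_eq_ite {t : Finset (Fin d → ℤ)} {n : Fin d → ℤ}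
    (c : (Fin d → ℤ) → ℂ) (hn : ∀ k ∈ t, n + k ∈ t → n = 0) :
    ∫ x, eChar n x * ((‖∑ k ∈ t, c k * eChar k x‖ ^ 2 : ℝ) : ℂ) ∂haarT d
      = if n = 0 then ((∑ k ∈ t, ‖c k‖ ^ 2 : ℝ) : ℂ) else 0 := by
  rw [integral_eChar_mul_normSq_sum]
  split_ifs with h0
  · subst h0
    push_cast
    simp [Finset.sum_ite_eq, Complex.mul_conj']
  · refine Finset.sum_eq_zero fun k hk => Finset.sum_eq_zero fun l hl => ?_
    rw [if_neg]
    rintro rfl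
    exact h0 (hn k hk hl)

theorem integral_sum_eChar_mul_normSq_sum {F t : Finset (Fin d → ℤ)} (p c : (Fin d → ℤ) → ℂ)
    (hsep : ∀ n ∈ F, ∀ k ∈ t, n + k ∈ t → n = 0) :
    ∫ x, (∑ n ∈ F, p n * eChar n x) * ((‖∑ k ∈ t, c k * eChar k x‖ ^ 2 : ℝ) : ℂ) ∂haarT d
      = ((∑ k ∈ t, ‖c k‖ ^ 2 : ℝ) : ℂ) * ∫ x, ∑ n ∈ F, p n * eChar n x ∂haarT d := by
  have hcont : Continuous fun x => ((‖∑ k ∈ t, c k * eChar k x‖ ^ 2 : ℝ) : ℂ) := by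
    fun_prop
  simp_rw [Finset.sum_mul, mul_assoc]
  rw [integral_finsetSum _ fun n _ => (by fun_prop : Continuous _).integrable_of_compactSpace,
    integral_finsetSum _ fun n _ => (by fun_prop : Continuous _).integrable_of_compactSpace,
    Finset.mul_sum]
  refine Finset.sum_congr rfl fun n hn => ?_
  rw [integral_const_mul, integral_const_mul, integral_eChar_mul_normSq_sum_eq_ite c (hsep n hn),
    integral_eChar]
  split_ifs <;> ring

end Fourier

theorem norm_integral_mul_sub_integral_le {X : Type*} [TopologicalSpace X] [CompactSpace X]
    [MeasurableSpace X] [OpensMeasurableSpace X] {μ : Measure X} [IsProbabilityMeasure μ]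
    {a P : X → ℂ} {ρ : X → ℝ} {δ : ℝ} (ha : Continuous a) (hP : Continuous P) (hρ : Continuous ρ)
    (hρ0 : ∀ x, 0 ≤ ρ x) (hρ1 : ∫ x, ρ x ∂μ = 1)
    (hPρ : ∫ x, P x * ρ x ∂μ = ∫ x, P x ∂μ) (haP : ∀ x, ‖a x - P x‖ ≤ δ) :
    ‖∫ x, a x * ρ x ∂μ - ∫ x, a x ∂μ‖ ≤ 2 * δ := by
  have hsplit : ∫ x, a x * ρ x ∂μ - ∫ x, a x ∂μ
      = ∫ x, (a x - P x) * ρ x ∂μ - ∫ x, (a x - P x) ∂μ := by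
    simp only [sub_mul]
    rw [integral_sub (by fun_prop : Continuous _).integrable_of_compactSpace
        (by fun_prop : Continuous _).integrable_of_compactSpace,
      integral_sub ha.integrable_of_compactSpace hP.integrable_of_compactSpace, hPρ]
    ring
  have hbound_weighted : ‖∫ x, (a x - P x) * ρ x ∂μ‖ ≤ δ := by
    calc ‖∫ x, (a x - P x) * ρ x ∂μ‖ ≤ ∫ x, δ * ρ x ∂μ := by
          refine norm_integral_le_of_norm_le (hρ.const_mul δ).integrable_of_compactSpace
            (Filter.Eventually.of_forall fun x => ?_)
          rw [norm_mul, Complex.norm_real, Real.norm_of_nonneg (hρ0 x)]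
          exact mul_le_mul_of_nonneg_right (haP x) (hρ0 x)
      _ = δ := by rw [integral_const_mul, hρ1, mul_one]
  have hbound : ‖∫ x, (a x - P x) ∂μ‖ ≤ δ := by
    simpa using norm_integral_le_of_norm_le_const (μ := μ) (Filter.Eventually.of_forall haP)
  rw [hsplit, two_mul]
  exact (norm_sub_le _ _).trans (add_le_add hbound_weighted hbound)

theorem Int.abs_le_sqrt_of_sq_le {x : ℤ} {n : ℕ} (h : x ^ 2 ≤ n) : |x| ≤ n.sqrt := by
  rw [Int.abs_eq_natAbs, Nat.cast_le, Nat.le_sqrt']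
  have : ((x.natAbs ^ 2 : ℕ) : ℤ) ≤ n := by rwa [Nat.cast_pow, Int.natAbs_sq]
  exact_mod_cast this

theorem eq_of_dot_eq_of_cross_eq {k₀ k₁ l₀ l₁ n₀ n₁ : ℤ} (hn : n₀ ≠ 0 ∨ n₁ ≠ 0)
    (hdot : k₀ * n₀ + k₁ * n₁ = l₀ * n₀ + l₁ * n₁)
    (hcross : k₀ * n₁ - k₁ * n₀ = l₀ * n₁ - l₁ * n₀) : k₀ = l₀ ∧ k₁ = l₁ := by
  have hn2 : n₀ ^ 2 + n₁ ^ 2 ≠ 0 := by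
    rcases hn with h | h <;> positivity
  exact ⟨mul_right_cancel₀ hn2 (by linear_combination n₀ * hdot + n₁ * hcross),
    mul_right_cancel₀ hn2 (by linear_combination n₁ * hdot - n₀ * hcross)⟩

def CircleSeparated (M E : ℕ) : Prop :=
  ∀ k n : Fin 2 → ℤ, k 0 ^ 2 + k 1 ^ 2 = E → (n 0 + k 0) ^ 2 + (n 1 + k 1) ^ 2 = E → n ≠ 0 →
    (M : ℤ) < |n 0| + |n 1|

theorem CircleSeparated.mono {M M' E : ℕ} (h : CircleSeparated M E) (hM : M' ≤ M) :
    CircleSeparated M' E :=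
  fun k n hk hnk hn => lt_of_le_of_lt (by exact_mod_cast hM) (h k n hk hnk hn)

theorem pi_fin_two_ne_zero_iff {n : Fin 2 → ℤ} : n ≠ 0 ↔ n 0 ≠ 0 ∨ n 1 ≠ 0 := by
  simp [funext_iff, Fin.forall_fin_two, ← not_and_or]

theorem ncard_not_circleSeparated_le (M N : ℕ) :
    {E | E ≤ N ∧ ¬ CircleSeparated M E}.ncard ≤ (2 * M + 1) ^ 2 * (2 * N.sqrt * M + 1) := by
  have hwit : ∀ E ∈ {E | E ≤ N ∧ ¬ CircleSeparated M E}, ∃ k n : Fin 2 → ℤ,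
      k 0 ^ 2 + k 1 ^ 2 = E ∧ (n 0 + k 0) ^ 2 + (n 1 + k 1) ^ 2 = E ∧ (n 0 ≠ 0 ∨ n 1 ≠ 0) ∧
        |n 0| + |n 1| ≤ M := by
    rintro E ⟨-, hE⟩
    simp only [CircleSeparated, not_forall, not_lt, pi_fin_two_ne_zero_iff] at hE
    obtain ⟨k, n, hk, hnk, hn, hnM⟩ := hE
    exact ⟨k, n, hk, hnk, hn, hnM⟩
  choose! k n hk hnk hn hnM using hwit
  set K : ℤ := N.sqrt * M
  let box : Finset (ℤ × ℤ × ℤ) :=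
    Finset.Icc (-M : ℤ) M ×ˢ Finset.Icc (-M : ℤ) M ×ˢ Finset.Icc (-K) K
  have hbox : box.card = (2 * M + 1) ^ 2 * (2 * N.sqrt * M + 1) := by
    simp only [box, Finset.card_product, Int.card_Icc, K]
    rw [show (M : ℤ) + 1 - -M = ((2 * M + 1 : ℕ) : ℤ) by push_cast; ring,
      show (N.sqrt : ℤ) * M + 1 - -(N.sqrt * M) = ((2 * N.sqrt * M + 1 : ℕ) : ℤ) by push_cast; ring,
      Int.toNat_natCast, Int.toNat_natCast]
    ring
  rw [← hbox, ← Set.ncard_coe_finset]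
  refine Set.ncard_le_ncard_of_injOn
    (fun E => (n E 0, n E 1, k E 0 * n E 1 - k E 1 * n E 0)) ?_ ?_ box.finite_toSet
  · intro E hE
    have hEN : (E : ℤ) ≤ N := by exact_mod_cast hE.1
    have hk0 : |k E 0| ≤ N.sqrt :=
      Int.abs_le_sqrt_of_sq_le (by nlinarith [hk E hE, sq_nonneg (k E 1)])
    have hk1 : |k E 1| ≤ N.sqrt :=
      Int.abs_le_sqrt_of_sq_le (by nlinarith [hk E hE, sq_nonneg (k E 0)])
    have hn0 := abs_nonneg (n E 0)
    have hn1 := abs_nonneg (n E 1)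
    have hcross : |k E 0 * n E 1 - k E 1 * n E 0| ≤ K :=
      calc |k E 0 * n E 1 - k E 1 * n E 0| ≤ |k E 0| * |n E 1| + |k E 1| * |n E 0| := by
            rw [← abs_mul, ← abs_mul]; exact abs_sub _ _
        _ ≤ N.sqrt * |n E 1| + N.sqrt * |n E 0| := by gcongr
        _ ≤ K := by have := hnM E hE; simp only [K]; nlinarith
    simp only [box, Finset.coe_product, Set.mem_prod, Finset.coe_Icc, Set.mem_Icc]
    refine ⟨abs_le.1 ?_, abs_le.1 ?_, abs_le.1 hcross⟩ <;> linarith [hnM E hE]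
  · intro E hE E' hE' heq
    simp only [Prod.mk.injEq] at heq
    obtain ⟨h0, h1, hcross⟩ := heq
    rw [h0, h1] at hcross
    have hdot : k E 0 * n E' 0 + k E 1 * n E' 1 = k E' 0 * n E' 0 + k E' 1 * n E' 1 := by
      have hnkE := hnk E hE
      rw [h0, h1] at hnkE
      refine mul_left_cancel₀ two_ne_zero ?_
      linear_combination hnkE - hk E hE - hnk E' hE' + hk E' hE'
    obtain ⟨e0, e1⟩ := eq_of_dot_eq_of_cross_eq (h0 ▸ h1 ▸ hn E hE) hdot hcross
    have := hk E hE
    rw [e0, e1, hk E' hE'] at this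
    exact_mod_cast this.symm

theorem le_ncard_sumTwoSquares_Icc {N : ℕ} (hN : 16 ≤ N) :
    N.sqrt * N.sqrt.sqrt ≤ 4 * (sumTwoSquares ∩ Set.Icc 1 N).ncard := by
  set B := N.sqrt
  set q := B.sqrt
  have hB : 4 ≤ B := Nat.le_sqrt.2 (by omega)
  have hBN : B * B ≤ N := Nat.sqrt_le N
  have hqB : q * q ≤ B := Nat.sqrt_le B
  let D : Finset (ℕ × ℕ) := Finset.Ico (B / 2) B ×ˢ Finset.range (q / 2 + 1)
  have hsmall : ∀ p ∈ D, B / 2 ≤ p.1 ∧ p.1 < B ∧ p.2 * p.2 ≤ p.1 := by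
    rintro ⟨b, a⟩ hp
    simp only [D, Finset.mem_product, Finset.mem_Ico, Finset.mem_range] at hp
    have h2a : 2 * a ≤ q := by omega
    have : 4 * (a * a) ≤ q * q := by nlinarith [Nat.mul_le_mul h2a h2a]
    exact ⟨hp.1.1, hp.1.2, show a * a ≤ b by omega⟩
  have hmaps : ∀ p ∈ D, p.1 * p.1 + p.2 * p.2 ∈ sumTwoSquares ∩ Set.Icc 1 N := by
    intro p hp
    obtain ⟨hb, hbB, hab⟩ := hsmall p hp
    have : (p.1 + 1) * (p.1 + 1) ≤ B * B := Nat.mul_le_mul hbB hbB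
    have : 1 ≤ p.1 := by omega
    refine ⟨⟨p.1, p.2, by push_cast; ring⟩, ?_, ?_⟩ <;> nlinarith
  have hinj : Set.InjOn (fun p : ℕ × ℕ => p.1 * p.1 + p.2 * p.2) D := by
    intro p hp p' hp' heq
    have hroot : ∀ p ∈ D, (p.1 * p.1 + p.2 * p.2).sqrt = p.1 :=
      fun p hp => Nat.sqrt_add_eq p.1 (by have := hsmall p hp; omega)
    have h1 : p.1 = p'.1 := by rw [← hroot p hp, ← hroot p' hp']; exact congrArg Nat.sqrt heq
    have h2 : p.2 = p'.2 := Nat.mul_self_inj.1 (by simp only at heq; rw [h1] at heq; omega)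
    exact Prod.ext h1 h2
  have hcard : B * q ≤ 4 * D.card := by
    rw [Finset.card_product, Nat.card_Ico, Finset.card_range]
    calc B * q ≤ (2 * (B - B / 2)) * (2 * (q / 2 + 1)) := Nat.mul_le_mul (by omega) (by omega)
      _ = 4 * ((B - B / 2) * (q / 2 + 1)) := by ring
  refine hcard.trans (Nat.mul_le_mul_left 4 ?_)
  rw [← Set.ncard_coe_finset]
  exact Set.ncard_le_ncard_of_injOn _ hmaps hinj ((Set.finite_Icc 1 N).inter_of_right _)

def root16 (E : ℕ) : ℕ := E.sqrt.sqrt.sqrt.sqrt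

theorem root16_mono : Monotone root16 := fun _ _ h =>
  Nat.sqrt_le_sqrt (Nat.sqrt_le_sqrt (Nat.sqrt_le_sqrt (Nat.sqrt_le_sqrt h)))

theorem root16_pow (m : ℕ) : root16 (m ^ 16) = m := by
  rw [root16, show m ^ 16 = ((((m ^ 2) ^ 2) ^ 2) ^ 2) by ring]
  simp only [Nat.sqrt_eq']

theorem tendsto_root16_atTop : Filter.Tendsto root16 Filter.atTop Filter.atTop :=
  Filter.tendsto_atTop_atTop.2 fun m =>
    ⟨m ^ 16, fun _ hN => (root16_pow m).ge.trans (root16_mono hN)⟩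

theorem root16_pow_four_le (N : ℕ) : root16 N ^ 4 ≤ N.sqrt.sqrt := by
  have h1 := Nat.sqrt_le' N.sqrt.sqrt.sqrt
  have h2 := Nat.sqrt_le' N.sqrt.sqrt
  calc root16 N ^ 4 = (root16 N ^ 2) ^ 2 := by ring
    _ ≤ N.sqrt.sqrt.sqrt ^ 2 := Nat.pow_le_pow_left h1 2
    _ ≤ N.sqrt.sqrt := h2

def goodEigenvalues : Set ℕ := {E | E ∈ sumTwoSquares ∧ CircleSeparated (root16 E) E}

theorem ncard_sdiff_goodEigenvalues_mul_root16_le {N : ℕ} (hN : 16 ≤ N) :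
    ((sumTwoSquares ∩ Set.Icc 1 N) \ (goodEigenvalues ∩ Set.Icc 1 N)).ncard * root16 N
      ≤ 108 * (sumTwoSquares ∩ Set.Icc 1 N).ncard := by
  set M := root16 N
  have hM : 1 ≤ M := (root16_pow 1).ge.trans (root16_mono (by omega))
  have hB : 1 ≤ N.sqrt := Nat.le_sqrt.2 (by omega)
  have hbad : (sumTwoSquares ∩ Set.Icc 1 N) \ (goodEigenvalues ∩ Set.Icc 1 N)
      ⊆ {E | E ≤ N ∧ ¬ CircleSeparated M E} := by
    rintro E ⟨⟨hE, hEI⟩, hgood⟩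
    exact ⟨hEI.2, fun hsep => hgood ⟨⟨hE, hsep.mono (root16_mono hEI.2)⟩, hEI⟩⟩
  have hfin : {E | E ≤ N ∧ ¬ CircleSeparated M E}.Finite :=
    (Set.finite_Iic N).subset fun E hE => hE.1
  calc ((sumTwoSquares ∩ Set.Icc 1 N) \ (goodEigenvalues ∩ Set.Icc 1 N)).ncard * M
      ≤ (2 * M + 1) ^ 2 * (2 * N.sqrt * M + 1) * M :=
        Nat.mul_le_mul_right M ((Set.ncard_le_ncard hbad hfin).trans
          (ncard_not_circleSeparated_le M N))
    _ ≤ (3 * M) ^ 2 * (3 * N.sqrt * M) * M := by gcongr <;> nlinarith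
    _ = 27 * N.sqrt * M ^ 4 := by ring
    _ ≤ 27 * N.sqrt * N.sqrt.sqrt := Nat.mul_le_mul_left _ (root16_pow_four_le N)
    _ ≤ 108 * (sumTwoSquares ∩ Set.Icc 1 N).ncard := by
        have := le_ncard_sumTwoSquares_Icc hN
        rw [mul_assoc]; omega

theorem tendsto_div_one_of_sub_mul_le {g t f : ℕ → ℝ} {C : ℝ}
    (hf : Filter.Tendsto f Filter.atTop Filter.atTop)
    (h : ∀ᶠ N in Filter.atTop, 0 < t N ∧ g N ≤ t N ∧ (t N - g N) * f N ≤ C * t N) :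
    Filter.Tendsto (fun N => g N / t N) Filter.atTop (nhds 1) := by
  have hlow : Filter.Tendsto (fun N => 1 - C / f N) Filter.atTop (nhds 1) := by
    simpa using tendsto_const_nhds.sub (tendsto_const_nhds.div_atTop hf)
  refine tendsto_of_tendsto_of_tendsto_of_le_of_le' hlow tendsto_const_nhds ?_ ?_
  · filter_upwards [h, hf.eventually_gt_atTop 0] with N hN hfN
    obtain ⟨ht, -, hle⟩ := hN
    rw [sub_le_comm, one_sub_div ht.ne', div_le_div_iff₀ ht hfN]
    exact hle
  · filter_upwards [h] with N hN
    exact div_le_one_of_le₀ hN.2.1 hN.1.le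

theorem tendsto_ncard_goodEigenvalues_div :
    Filter.Tendsto (fun N : ℕ =>
        (Set.ncard (goodEigenvalues ∩ Set.Icc 1 N) : ℝ) /
          (Set.ncard (sumTwoSquares ∩ Set.Icc 1 N) : ℝ))
      Filter.atTop (nhds 1) := by
  refine tendsto_div_one_of_sub_mul_le (C := 108)
    (tendsto_natCast_atTop_atTop.comp tendsto_root16_atTop) ?_
  filter_upwards [Filter.eventually_ge_atTop 16] with N hN
  have hfin : (sumTwoSquares ∩ Set.Icc 1 N).Finite := (Set.finite_Icc 1 N).inter_of_right _
  have hsub : goodEigenvalues ∩ Set.Icc 1 N ⊆ sumTwoSquares ∩ Set.Icc 1 N :=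
    fun E hE => ⟨hE.1.1, hE.2⟩
  have hpos : 0 < (sumTwoSquares ∩ Set.Icc 1 N).ncard := by
    have := le_ncard_sumTwoSquares_Icc hN
    have : 1 ≤ N.sqrt.sqrt := Nat.le_sqrt.2 (Nat.le_sqrt.2 (by omega))
    have : 1 ≤ N.sqrt := Nat.le_sqrt.2 (by omega)
    nlinarith
  have hkey := ncard_sdiff_goodEigenvalues_mul_root16_le hN
  rw [Set.ncard_sdiff hsub (hfin.subset hsub)] at hkey
  have hle := Set.ncard_le_ncard hsub hfin
  refine ⟨by exact_mod_cast hpos, by exact_mod_cast hle, ?_⟩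
  have : (((sumTwoSquares ∩ Set.Icc 1 N).ncard - (goodEigenvalues ∩ Set.Icc 1 N).ncard : ℕ) : ℝ)
      * root16 N ≤ 108 * (sumTwoSquares ∩ Set.Icc 1 N).ncard := by exact_mod_cast hkey
  simpa [Nat.cast_sub hle] using this

theorem znorm_sq_eq_natCast_iff {d : ℕ} (k : Fin d → ℤ) (E : ℕ) :
    znorm k ^ 2 = E ↔ ∑ i, k i ^ 2 = (E : ℤ) := by
  rw [znorm, Real.sq_sqrt (by positivity)]
  exact_mod_cast Iff.rfl

theorem finite_setOf_znorm_sq_eq (d E : ℕ) : {k : Fin d → ℤ | znorm k ^ 2 = E}.Finite := by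
  refine (Set.Finite.pi fun _ => Set.finite_Icc (-(E : ℤ)) E).subset fun k hk i _ => ?_
  rw [Set.mem_ofPred_eq, znorm_sq_eq_natCast_iff] at hk
  have hki : k i ^ 2 ≤ E :=
    hk ▸ Finset.single_le_sum (fun j _ => sq_nonneg (k j)) (Finset.mem_univ i)
  exact abs_le.1 (((Int.abs_eq_natAbs (k i)).trans_le (Int.natAbs_le_self_sq _)).trans hki)

theorem exists_finset_of_znorm_sq_eq {d E : ℕ} {ψ : Td d → ℂ} {c : (Fin d → ℤ) → ℂ}
    (hc : ∀ k, c k ≠ 0 → znorm k ^ 2 = E) (hψ : ∀ x, ψ x = ∑' k, c k * eChar k x)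
    (hnorm : ∑' k, ‖c k‖ ^ 2 = 1) :
    ∃ t : Finset (Fin d → ℤ), (∀ k ∈ t, znorm k ^ 2 = E) ∧
      (∀ x, ψ x = ∑ k ∈ t, c k * eChar k x) ∧ ∑ k ∈ t, ‖c k‖ ^ 2 = 1 := by
  have hfin : {k | c k ≠ 0}.Finite := (finite_setOf_znorm_sq_eq d E).subset hc
  refine ⟨hfin.toFinset, fun k hk => hc k (hfin.mem_toFinset.1 hk), fun x => ?_, ?_⟩
  · rw [hψ x, tsum_eq_sum fun k hk => ?_]
    rw [not_not.1 (mt hfin.mem_toFinset.2 hk), zero_mul]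
  · rw [← hnorm, tsum_eq_sum fun k hk => ?_]
    rw [not_not.1 (mt hfin.mem_toFinset.2 hk), norm_zero, zero_pow two_ne_zero]

theorem norm_integral_mul_normSq_sub_integral_le {a : Td 2 → ℂ} (ha : Continuous a)
    {p : (Fin 2 → ℤ) →₀ ℂ} {δ : ℝ} (hp : ∀ x, ‖a x - ∑ n ∈ p.support, p n * eChar n x‖ ≤ δ)
    {M E : ℕ} (hM : ∀ n ∈ p.support, |n 0| + |n 1| ≤ M) (hE : CircleSeparated M E)
    {ψ : Td 2 → ℂ} {c : (Fin 2 → ℤ) → ℂ} (hc : ∀ k, c k ≠ 0 → znorm k ^ 2 = E)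
    (hψ : ∀ x, ψ x = ∑' k, c k * eChar k x) (hnorm : ∑' k, ‖c k‖ ^ 2 = 1) :
    ‖(∫ x, a x * ((‖ψ x‖ ^ 2 : ℝ) : ℂ) ∂(haarT 2)) - ∫ x, a x ∂(haarT 2)‖ ≤ 2 * δ := by
  obtain ⟨t, ht, hψt, hnormt⟩ := exists_finset_of_znorm_sq_eq hc hψ hnorm
  have hcirc : ∀ k ∈ t, k 0 ^ 2 + k 1 ^ 2 = E := fun k hk => by
    simpa [Fin.sum_univ_two] using (znorm_sq_eq_natCast_iff k E).1 (ht k hk)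
  have hsep : ∀ n ∈ p.support, ∀ k ∈ t, n + k ∈ t → n = 0 := fun n hn k hk hnk => by
    by_contra h0
    exact (hM n hn).not_gt (hE k n (hcirc k hk) (hcirc _ hnk) h0)
  simp_rw [funext hψt]
  have hP := integral_sum_eChar_mul_normSq_sum p c hsep
  have hρ1 := integral_eChar_mul_normSq_sum_eq_ite (t := t) (n := 0) c fun _ _ _ => rfl
  simp only [hnormt, Complex.ofReal_one, one_mul, eChar_zero, if_pos] at hP hρ1
  refine norm_integral_mul_sub_integral_le ha (by fun_prop) (by fun_prop) (fun x => by positivity)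
    ?_ hP hp
  exact Complex.ofReal_eq_one.1 (integral_ofReal.symm.trans hρ1)

/-- along a relative density-one set of eigenvalues, *all* eigenfunctions
equidistribute on `𝕋²`. -/
theorem statement14 :
    ∃ S : Set ℕ, S ⊆ sumTwoSquares ∧
      Filter.Tendsto (fun N : ℕ =>
          (Set.ncard (S ∩ Set.Icc 1 N) : ℝ) / (Set.ncard (sumTwoSquares ∩ Set.Icc 1 N) : ℝ))
        Filter.atTop (nhds 1) ∧
      ∀ a : Td 2 → ℂ, Continuous a → ∀ ε : ℝ, 0 < ε → ∃ Λ : ℝ, 0 < Λ ∧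
        ∀ E ∈ S, Λ ≤ (E : ℝ) →
          ∀ (ψ : Td 2 → ℂ) (c : (Fin 2 → ℤ) → ℂ),
            (∀ k, c k ≠ 0 → znorm k ^ 2 = E) →
            (∀ x, ψ x = ∑' k : Fin 2 → ℤ, c k * eChar k x) →
            (∑' k : Fin 2 → ℤ, ‖c k‖ ^ 2 = 1) →
            ‖(∫ x, a x * ((‖ψ x‖ ^ 2 : ℝ) : ℂ) ∂(haarT 2)) - ∫ x, a x ∂(haarT 2)‖ < ε := by
  refine ⟨goodEigenvalues, fun E hE => hE.1, tendsto_ncard_goodEigenvalues_div, ?_⟩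
  intro a ha ε hε
  obtain ⟨p, hp⟩ := exists_sum_eChar_approx ha (by positivity : 0 < ε / 3)
  set M := p.support.sup fun n => (|n 0| + |n 1|).toNat
  have hM : ∀ n ∈ p.support, |n 0| + |n 1| ≤ M := fun n hn =>
    Int.toNat_le.1 (Finset.le_sup (f := fun n => (|n 0| + |n 1|).toNat) hn)
  refine ⟨((M + 1) ^ 16 : ℕ), by positivity, fun E hE hEΛ ψ c hc hψ hnorm => ?_⟩
  have hME : M ≤ root16 E :=
    (root16_pow (M + 1)).ge.trans (root16_mono (by exact_mod_cast hEΛ)) |>.trans' M.le_succ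
  calc _ ≤ 2 * (ε / 3) := norm_integral_mul_normSq_sub_integral_le ha (fun x => (hp x).le) hM
        (hE.2.mono hME) hc hψ hnorm
    _ < ε := by linarith
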